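/- arXiv:1804.05451 — 2 statements merged into one kernel-verified Lean document; each statement's English description precedes it below -/
import Mathlib

section
/- Let F = ZMod p for a prime p, and let A, B be finite subsets of F^n (functions into F indexed by Fin n). Let a : F^n → ℂ and b : F^n → ℂ be functions supported on A and B respectively with ‖a‖_∞ ≤ 1 and ‖b‖_∞ ≤ 1. Then for every nonzero λ ∈ F, |∑_{x ∈ A} ∑_{y ∈ B} a(x) b(y) e(λ (x·y))| ≤ |A|^{1/2} |B|^{1/2} p^{n/8} (Λ(A) Λ(B))^{1/8}, where e(t) = exp(2πi t/p) applied to the canonical integer representative, x·y = ∑_i x_i y_i, and Λ(S) denotes the additive energy of S, i.e., the number of quadruples (s1,s2,s3,s4) ∈ S^4 with s1 + s2 = s3 + s4. -/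
/-!
Let `K(z) = ∑_{y ∈ B} e(λ z·y)`. Cauchy–Schwarz in `y` and expanding the square give
`S² ≤ |B| ∑_{x, x' ∈ A} |K(x - x')|`; Cauchy–Schwarz in `(x, x')` bounds the square of the
latter by `|A|² ∑_z r(z) |K(z)|²`, where `r(z)` counts the representations `z = x - x'` with
`x, x' ∈ A`. A last Cauchy–Schwarz bounds this by `(∑ r²)(∑ |K|⁴) = Λ(A) · pⁿ Λ(B)`, the fourth
moment of `K` being computed by orthogonality of characters. Hence
`S⁸ ≤ |A|⁴ |B|⁴ pⁿ Λ(A) Λ(B)`. The argument works verbatim for `ψ(x ⬝ᵥ y)` with `ψ` any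
primitive additive character of a finite commutative ring.
-/

open Finset

/-- The standard additive character on `ZMod p`. -/
noncomputable def chr (p : ℕ) (t : ZMod p) : ℂ :=
  Complex.exp (2 * Real.pi * Complex.I * t.val / p)

/-- Dot product on `(ZMod p)^n`. -/
def dotp {p n : ℕ} (x y : Fin n → ZMod p) : ZMod p := ∑ i, x i * y i

/-- Additive energy: number of quadruples `(s1,s2,s3,s4) ∈ S^4` with `s1 + s2 = s3 + s4`. -/
def addEnergy {G : Type*} [AddCommGroup G] [DecidableEq G] (S : Finset G) : ℕ :=
  (((S ×ˢ S) ×ˢ (S ×ˢ S)).filter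
    (fun q => q.1.1 + q.1.2 = q.2.1 + q.2.2)).card

open scoped ComplexConjugate

section AddEnergy

variable {G : Type*} [AddCommGroup G] [DecidableEq G]

lemma addEnergy_eq_card_filter_sub_eq_sub (A : Finset G) :
    _root_.addEnergy A = #{q ∈ (A ×ˢ A) ×ˢ (A ×ˢ A) | q.1.1 - q.1.2 = q.2.1 - q.2.2} := by
  refine card_nbij' (fun q => ((q.1.1, q.2.2), (q.2.1, q.1.2)))
    (fun q => ((q.1.1, q.2.2), (q.2.1, q.1.2))) ?_ ?_ (fun _ _ => rfl) (fun _ _ => rfl)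
  all_goals
    rintro ⟨⟨x₁, x₂⟩, x₃, x₄⟩
    simp only [coe_filter, mem_product, Set.mem_ofPred_eq, sub_eq_sub_iff_add_eq_add]
    tauto

lemma addEnergy_eq_sum_sq_card_sub_eq [Fintype G] (A : Finset G) :
    _root_.addEnergy A = ∑ z, #{q ∈ A ×ˢ A | q.1 - q.2 = z} ^ 2 := by
  simp_rw [sq, ← card_product, ← filter_product, addEnergy_eq_card_filter_sub_eq_sub]
  rw [card_eq_sum_card_fiberwise (f := fun q => q.1.1 - q.1.2) (t := univ)
    (fun _ _ => mem_univ _)]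
  refine sum_congr rfl fun z _ => congrArg card ?_
  rw [filter_filter]
  refine filter_congr fun q _ => ?_
  constructor
  · rintro ⟨h, rfl⟩; exact ⟨rfl, h.symm⟩
  · rintro ⟨rfl, h⟩; exact ⟨h.symm, rfl⟩

lemma sq_sum_sub_le_addEnergy_mul_sum_sq [Fintype G] (A : Finset G) (f : G → ℝ) :
    (∑ q ∈ A ×ˢ A, f (q.1 - q.2)) ^ 2 ≤ _root_.addEnergy A * ∑ z, f z ^ 2 := by
  rw [← sum_fiberwise' (A ×ˢ A) (fun q => q.1 - q.2) f, addEnergy_eq_sum_sq_card_sub_eq]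
  simp only [sum_const, nsmul_eq_mul, Nat.cast_sum, Nat.cast_pow]
  exact sum_mul_sq_le_sq_mul_sq _ _ _

end AddEnergy

lemma norm_sum_sum_mul_le_sum_norm_sum {α β : Type*} (A : Finset α) (B : Finset β)
    (a : α → ℂ) (b : β → ℂ) (e : α → β → ℂ) (hb : ∀ y, ‖b y‖ ≤ 1) :
    ‖∑ x ∈ A, ∑ y ∈ B, a x * b y * e x y‖ ≤ ∑ y ∈ B, ‖∑ x ∈ A, a x * e x y‖ := by
  rw [sum_comm]
  refine (norm_sum_le _ _).trans (sum_le_sum fun y _ => ?_)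
  have : ∑ x ∈ A, a x * b y * e x y = b y * ∑ x ∈ A, a x * e x y := by
    rw [mul_sum]; exact sum_congr rfl fun x _ => by ring
  rw [this, norm_mul]
  exact mul_le_of_le_one_left (norm_nonneg _) (hb y)

lemma AddChar.sq_norm_sum_mul_apply {G α : Type*} [AddCommGroup G] [Finite G]
    (ψ : AddChar G ℂ) (U : Finset α) (c : α → ℂ) (f : α → G) :
    (‖∑ u ∈ U, c u * ψ (f u)‖ : ℂ) ^ 2 =
      ∑ u ∈ U, ∑ v ∈ U, c u * conj (c v) * ψ (f u - f v) := by
  rw [← Complex.mul_conj', map_sum, sum_mul_sum]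
  refine sum_congr rfl fun u _ => sum_congr rfl fun v _ => ?_
  rw [map_mul, ← AddChar.map_neg_eq_conj, sub_eq_add_neg, AddChar.map_add_eq_mul]
  ring

lemma AddChar.map_sum_eq_prod {A M ι : Type*} [AddCommMonoid A] [CommMonoid M] (ψ : AddChar A M)
    (s : Finset ι) (f : ι → A) : ψ (∑ i ∈ s, f i) = ∏ i ∈ s, ψ (f i) :=
  map_prod ψ.toMonoidHom (fun i => Multiplicative.ofAdd (f i)) s

section DotProductCharacter

variable {R ι : Type*} [CommRing R] [Fintype ι]

noncomputable def dotCharSum (ψ : AddChar R ℂ) (B : Finset (ι → R)) (z : ι → R) : ℂ :=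
  ∑ y ∈ B, ψ (z ⬝ᵥ y)

lemma dotCharSum_mul_self (ψ : AddChar R ℂ) (B : Finset (ι → R)) (z : ι → R) :
    dotCharSum ψ B z * dotCharSum ψ B z = ∑ u ∈ B ×ˢ B, ψ (z ⬝ᵥ (u.1 + u.2)) := by
  rw [dotCharSum, sum_mul_sum, sum_product]
  simp only [dotProduct_add, AddChar.map_add_eq_mul]

variable [Fintype R] {ψ : AddChar R ℂ}

lemma sum_sq_norm_sum_le_sum_norm_dotCharSum (A B : Finset (ι → R)) (a : (ι → R) → ℂ)
    (ha : ∀ x, ‖a x‖ ≤ 1) :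
    ∑ y ∈ B, ‖∑ x ∈ A, a x * ψ (x ⬝ᵥ y)‖ ^ 2 ≤
      ∑ q ∈ A ×ˢ A, ‖dotCharSum ψ B (q.1 - q.2)‖ := by
  have hW : ((∑ y ∈ B, ‖∑ x ∈ A, a x * ψ (x ⬝ᵥ y)‖ ^ 2 : ℝ) : ℂ) =
      ∑ q ∈ A ×ˢ A, a q.1 * conj (a q.2) * dotCharSum ψ B (q.1 - q.2) := by
    push_cast
    simp_rw [AddChar.sq_norm_sum_mul_apply, ← sub_dotProduct]
    rw [sum_comm, sum_product]
    refine sum_congr rfl fun x _ => ?_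
    rw [sum_comm]
    simp only [dotCharSum, mul_sum]
  rw [← Complex.norm_of_nonneg (sum_nonneg fun _ _ => sq_nonneg _), hW]
  refine (norm_sum_le _ _).trans (sum_le_sum fun q _ => ?_)
  rw [norm_mul, norm_mul, Complex.norm_conj]
  exact mul_le_of_le_one_left (norm_nonneg _)
    (mul_le_one₀ (ha _) (norm_nonneg _) (ha _))

variable [DecidableEq ι] [DecidableEq R]

lemma AddChar.sum_apply_dotProduct (hψ : ψ.IsPrimitive) (w : ι → R) :
    ∑ z : ι → R, ψ (z ⬝ᵥ w) =
      if w = 0 then (Fintype.card R : ℂ) ^ Fintype.card ι else 0 := by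
  simp_rw [dotProduct, AddChar.map_sum_eq_prod]
  rw [← Fintype.prod_sum (fun i t => ψ (t * w i))]
  simp_rw [AddChar.sum_mulShift _ hψ, Nat.cast_ite, Nat.cast_zero, Fintype.prod_ite_zero,
    prod_const, card_univ, funext_iff, Pi.zero_apply]

lemma sum_norm_dotCharSum_pow_four (hψ : ψ.IsPrimitive) (B : Finset (ι → R)) :
    ∑ z, ‖dotCharSum ψ B z‖ ^ 4 = Fintype.card R ^ Fintype.card ι * _root_.addEnergy B := by
  have hz (z : ι → R) : (‖dotCharSum ψ B z‖ : ℂ) ^ 4 =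
      ∑ u ∈ B ×ˢ B, ∑ v ∈ B ×ˢ B, ψ (z ⬝ᵥ (u.1 + u.2 - (v.1 + v.2))) := by
    rw [show (‖dotCharSum ψ B z‖ : ℂ) ^ 4 = (‖dotCharSum ψ B z * dotCharSum ψ B z‖ : ℂ) ^ 2 by
      rw [norm_mul]; push_cast; ring, dotCharSum_mul_self]
    simpa [dotProduct_sub] using
      AddChar.sq_norm_sum_mul_apply ψ (B ×ˢ B) 1 (fun u => z ⬝ᵥ (u.1 + u.2))
  apply Complex.ofReal_injective
  push_cast
  simp_rw [hz]
  rw [sum_comm]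
  simp_rw [sum_comm (s := univ), AddChar.sum_apply_dotProduct hψ, sub_eq_zero, ← sum_product',
    sum_ite, sum_const_zero, add_zero, sum_const, nsmul_eq_mul, mul_comm]
  rfl

end DotProductCharacter

theorem norm_sum_mul_apply_dotProduct_pow_eight_le {R ι : Type*} [CommRing R] [Fintype R]
    [DecidableEq R] [Fintype ι] [DecidableEq ι] {ψ : AddChar R ℂ} (hψ : ψ.IsPrimitive)
    (A B : Finset (ι → R)) (a b : (ι → R) → ℂ) (ha : ∀ x, ‖a x‖ ≤ 1) (hb : ∀ y, ‖b y‖ ≤ 1) :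
    ‖∑ x ∈ A, ∑ y ∈ B, a x * b y * ψ (x ⬝ᵥ y)‖ ^ 8 ≤
      #A ^ 4 * #B ^ 4 * Fintype.card R ^ Fintype.card ι *
        (_root_.addEnergy A * _root_.addEnergy B) := by
  set S := ‖∑ x ∈ A, ∑ y ∈ B, a x * b y * ψ (x ⬝ᵥ y)‖
  set W := ∑ y ∈ B, ‖∑ x ∈ A, a x * ψ (x ⬝ᵥ y)‖ ^ 2
  set N := ∑ q ∈ A ×ˢ A, ‖dotCharSum ψ B (q.1 - q.2)‖
  set M := ∑ q ∈ A ×ˢ A, ‖dotCharSum ψ B (q.1 - q.2)‖ ^ 2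
  have hSW : S ^ 2 ≤ #B * W := by
    refine (pow_le_pow_left₀ (norm_nonneg _)
      (norm_sum_sum_mul_le_sum_norm_sum A B a b _ hb) 2).trans ?_
    exact sq_sum_le_card_mul_sum_sq
  have hWN : W ≤ N := sum_sq_norm_sum_le_sum_norm_dotCharSum A B a ha
  have hNM : N ^ 2 ≤ #A ^ 2 * M := by
    have := sq_sum_le_card_mul_sum_sq (s := A ×ˢ A) (f := fun q => ‖dotCharSum ψ B (q.1 - q.2)‖)
    rwa [card_product, Nat.cast_mul, ← sq] at this
  have hM :
      M ^ 2 ≤ _root_.addEnergy A * (Fintype.card R ^ Fintype.card ι * _root_.addEnergy B) := by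
    rw [← sum_norm_dotCharSum_pow_four hψ B]
    convert sq_sum_sub_le_addEnergy_mul_sum_sq A (fun z => ‖dotCharSum ψ B z‖ ^ 2) using 3
    ring
  have hW0 : 0 ≤ W := sum_nonneg fun _ _ => sq_nonneg _
  calc S ^ 8 = (S ^ 2) ^ 4 := by ring
    _ ≤ (#B * W) ^ 4 := by gcongr
    _ ≤ (#B * N) ^ 4 := by gcongr
    _ = #B ^ 4 * (N ^ 2) ^ 2 := by ring
    _ ≤ #B ^ 4 * (#A ^ 2 * M) ^ 2 := by gcongr
    _ = #A ^ 4 * #B ^ 4 * M ^ 2 := by ring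
    _ ≤ #A ^ 4 * #B ^ 4 *
        (_root_.addEnergy A * (Fintype.card R ^ Fintype.card ι * _root_.addEnergy B)) := by gcongr
    _ = _ := by ring

lemma chr_eq_stdAddChar (p : ℕ) [NeZero p] (t : ZMod p) : chr p t = ZMod.stdAddChar t := by
  rw [ZMod.stdAddChar_apply, ZMod.toCircle_apply]
  rfl

theorem stmt0_general (p : ℕ) [Fact p.Prime] (n : ℕ)
    (A B : Finset (Fin n → ZMod p))
    (a b : (Fin n → ZMod p) → ℂ)
    (ha : ∀ x, ‖a x‖ ≤ 1) (hb : ∀ y, ‖b y‖ ≤ 1)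
    (lam : ZMod p) (hlam : lam ≠ 0) :
    ‖∑ x ∈ A, ∑ y ∈ B, a x * b y * chr p (lam * dotp x y)‖ ≤
      (A.card : ℝ) ^ ((1 : ℝ)/2) * (B.card : ℝ) ^ ((1 : ℝ)/2) *
        (p : ℝ) ^ ((n : ℝ)/8) *
        ((addEnergy A : ℝ) * (addEnergy B : ℝ)) ^ ((1 : ℝ)/8) := by
  have hψ : (ZMod.stdAddChar.mulShift lam).IsPrimitive :=
    .of_ne_one (ZMod.isPrimitive_stdAddChar p hlam)
  have key := norm_sum_mul_apply_dotProduct_pow_eight_le hψ A B a b ha hb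
  simp only [AddChar.mulShift_apply, ← chr_eq_stdAddChar, ZMod.card, Fintype.card_fin] at key
  have hrhs : ((A.card : ℝ) ^ ((1 : ℝ)/2) * (B.card : ℝ) ^ ((1 : ℝ)/2) * (p : ℝ) ^ ((n : ℝ)/8) *
      ((addEnergy A : ℝ) * (addEnergy B : ℝ)) ^ ((1 : ℝ)/8)) ^ 8 =
      #A ^ 4 * #B ^ 4 * p ^ n * ((addEnergy A : ℝ) * (addEnergy B : ℝ)) := by
    simp only [mul_pow, ← Real.rpow_natCast, ← Real.rpow_mul (Nat.cast_nonneg _),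
      ← Real.rpow_mul (mul_nonneg (Nat.cast_nonneg _) (Nat.cast_nonneg _))]
    norm_num
  exact le_of_pow_le_pow_left₀ (by norm_num) (by positivity) (hrhs ▸ key)

theorem stmt0 (p : ℕ) [Fact p.Prime] (n : ℕ)
    (A B : Finset (Fin n → ZMod p))
    (a b : (Fin n → ZMod p) → ℂ)
    (ha_supp : ∀ x ∉ A, a x = 0) (hb_supp : ∀ y ∉ B, b y = 0)
    (ha : ∀ x, ‖a x‖ ≤ 1) (hb : ∀ y, ‖b y‖ ≤ 1)
    (lam : ZMod p) (hlam : lam ≠ 0) :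
    ‖∑ x ∈ A, ∑ y ∈ B, a x * b y * chr p (lam * dotp x y)‖ ≤
      (A.card : ℝ) ^ ((1 : ℝ)/2) * (B.card : ℝ) ^ ((1 : ℝ)/2) *
        (p : ℝ) ^ ((n : ℝ)/8) *
        ((addEnergy A : ℝ) * (addEnergy B : ℝ)) ^ ((1 : ℝ)/8) :=
  stmt0_general p n A B a b ha hb lam hlam
end

section
/- Let F = ZMod p, p ≡ 3 (mod 4) prime, and P_3 = {(x, x·x) : x ∈ F^2} ⊆ F^3. Then the additive energy of the full paraboloid satisfies Λ(P_3) ≤ (p+1) * p^3. In particular Λ(P_3) ≤ 2 p^4 = 2 |P_3|^2. -/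
open Finset

def parab3 (p : ℕ) [NeZero p] : Finset ((Fin 2 → ZMod p) × ZMod p) :=
  Finset.univ.image (fun x : Fin 2 → ZMod p => (x, dotp x x))

/-!
Write `|x|²` for `dotp x x`. If `(x, |x|²) + (y, |y|²) = (u, s)`, the parallelogram law gives
`|x - y|² = 2s - |u|²`, and `x - y` determines the pair because `x + y = u` and `p` is odd; so a
point has at most as many representations as the circle `|z|² = 2s - |u|²` has points.
Since `-1` is not a square mod `p`, adjoin `i` with `i² = -1`: Frobenius then acts as
conjugation, `z₀² + z₁² = (z₀ + i z₁)^(p+1)`, and the circle embeds into the `(p+1)`-th roots of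
an element of a field, of which there are at most `p + 1`.
-/

section Frobenius

variable {p : ℕ} [Fact p.Prime] {K : Type*} [Field K] [Algebra (ZMod p) K] [CharP K p]

theorem frobenius_add_mul_algebraMap (hp : p % 4 = 3) {i : K} (hi : i ^ 2 = -1) (x y : ZMod p) :
    (algebraMap (ZMod p) K x + i * algebraMap (ZMod p) K y) ^ p
      = algebraMap (ZMod p) K x - i * algebraMap (ZMod p) K y := by
  have hip : i ^ p = -i := by
    obtain ⟨k, hk⟩ : ∃ k, p = 4 * k + 3 := ⟨p / 4, by omega⟩
    rw [hk, show 4 * k + 3 = 2 * (2 * k + 1) + 1 by ring, pow_succ, pow_mul, hi,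
      Odd.neg_one_pow ⟨k, rfl⟩, neg_one_mul]
  rw [add_pow_char, mul_pow, ← map_pow, ← map_pow, ZMod.pow_card, ZMod.pow_card, hip, neg_mul,
    sub_eq_add_neg]

theorem algebraMap_sq_add_sq_eq_pow (hp : p % 4 = 3) {i : K} (hi : i ^ 2 = -1) (x y : ZMod p) :
    algebraMap (ZMod p) K (x ^ 2 + y ^ 2)
      = (algebraMap (ZMod p) K x + i * algebraMap (ZMod p) K y) ^ (p + 1) := by
  rw [pow_succ _ p, frobenius_add_mul_algebraMap hp hi, map_add, map_pow, map_pow]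
  linear_combination (algebraMap (ZMod p) K y) ^ 2 * hi

end Frobenius

theorem injective_algebraMap_add_mul_algebraMap {F K : Type*} [Field F] [Field K] [Algebra F K]
    (hF : ¬IsSquare (-1 : F)) {i : K} (hi : i ^ 2 = -1) :
    Function.Injective fun v : F × F => algebraMap F K v.1 + i * algebraMap F K v.2 := by
  rintro ⟨a, b⟩ ⟨c, d⟩ h
  simp only at h
  by_cases hbd : b = d
  · subst hbd
    simpa using (algebraMap F K).injective (add_right_cancel h)
  · refine absurd ⟨(c - a) / (b - d), (algebraMap F K).injective ?_⟩ hF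
    have hbd' : algebraMap F K (b - d) ≠ 0 := by simpa [sub_eq_zero] using hbd
    have : i = algebraMap F K ((c - a) / (b - d)) := by
      rw [map_div₀, eq_div_iff hbd', map_sub, map_sub]; linear_combination h
    rw [map_mul, ← this, ← sq, hi, map_neg, map_one]

open Polynomial in
theorem card_filter_dotp_self_eq_le {p : ℕ} [Fact p.Prime] (hp : p % 4 = 3) (t : ZMod p) :
    #{v : Fin 2 → ZMod p | dotp v v = t} ≤ p + 1 := by
  classical
  let K := AlgebraicClosure (ZMod p)
  obtain ⟨i, hi⟩ := IsAlgClosed.exists_pow_nat_eq (-1 : K) two_pos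
  have hF : ¬IsSquare (-1 : ZMod p) := fun h => ZMod.exists_sq_eq_neg_one_iff.mp h hp
  let f : (Fin 2 → ZMod p) → K := (fun v : ZMod p × ZMod p =>
    algebraMap (ZMod p) K v.1 + i * algebraMap (ZMod p) K v.2) ∘ piFinTwoEquiv _
  have hf : Function.Injective f :=
    (injective_algebraMap_add_mul_algebraMap hF hi).comp (piFinTwoEquiv _).injective
  calc #{v : Fin 2 → ZMod p | dotp v v = t}
      ≤ (nthRoots (p + 1) (algebraMap (ZMod p) K t)).toFinset.card := by
        refine card_le_card_of_injOn f (fun v hv => ?_) hf.injOn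
        rw [mem_coe, mem_filter_univ] at hv
        rw [mem_coe, Multiset.mem_toFinset, mem_nthRoots p.succ_pos, ← hv, dotp,
          Fin.sum_univ_two, ← sq, ← sq]
        exact (algebraMap_sq_add_sq_eq_pow hp hi _ _).symm
    _ ≤ p + 1 := (Multiset.toFinset_card_le _).trans (card_nthRoots _ _)

theorem addEnergy_le_mul_card_sq {G : Type*} [AddCommGroup G] [DecidableEq G] (S : Finset G)
    (M : ℕ) (hM : ∀ w, #{q ∈ S ×ˢ S | q.1 + q.2 = w} ≤ M) : _root_.addEnergy S ≤ M * #S ^ 2 := by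
  calc _root_.addEnergy S = ∑ r ∈ S ×ˢ S, #{q ∈ S ×ˢ S | q.1 + q.2 = r.1 + r.2} := by
        simp only [_root_.addEnergy, card_filter, sum_product_right]
    _ ≤ ∑ _r ∈ S ×ˢ S, M := sum_le_sum fun r _ => hM _
    _ = M * #S ^ 2 := by rw [sum_const, card_product, smul_eq_mul, sq, mul_comm]

theorem mem_parab3 {p : ℕ} [NeZero p] {P : (Fin 2 → ZMod p) × ZMod p} :
    P ∈ parab3 p ↔ P.2 = dotp P.1 P.1 := by
  constructor
  · intro h
    obtain ⟨x, -, rfl⟩ := mem_image.mp h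
    rfl
  · intro h
    exact mem_image.mpr ⟨P.1, mem_univ _, Prod.ext rfl h.symm⟩

theorem card_parab3 {p : ℕ} [NeZero p] : #(parab3 p) = p ^ 2 := by
  rw [parab3, card_image_of_injective _ fun x y h => congrArg Prod.fst h, card_univ,
    Fintype.card_fun, ZMod.card, Fintype.card_fin]

theorem dotp_sub_self_add_dotp_add_self {p n : ℕ} (x y : Fin n → ZMod p) :
    dotp (x - y) (x - y) + dotp (x + y) (x + y) = 2 * dotp x x + 2 * dotp y y := by
  simp only [dotp, ← sum_add_distrib, mul_sum]
  exact sum_congr rfl fun j _ => by simp only [Pi.sub_apply, Pi.add_apply]; ring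

theorem card_filter_parab3_add_eq_le {p : ℕ} [NeZero p] (h2 : IsUnit (2 : ZMod p))
    (w : (Fin 2 → ZMod p) × ZMod p) :
    #{q ∈ parab3 p ×ˢ parab3 p | q.1 + q.2 = w}
      ≤ #{v : Fin 2 → ZMod p | dotp v v = 2 * w.2 - dotp w.1 w.1} := by
  refine card_le_card_of_injOn (fun q => q.1.1 - q.2.1) (fun q hq => ?_) fun q hq q' hq' h => ?_
  · simp only [mem_coe, mem_filter, mem_product, mem_parab3, mem_univ, true_and] at hq ⊢
    obtain ⟨⟨hx, hy⟩, rfl⟩ := hq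
    rw [eq_sub_iff_add_eq, Prod.fst_add, dotp_sub_self_add_dotp_add_self, Prod.snd_add, hx, hy,
      mul_add]
  · simp only [mem_coe, mem_filter, mem_product, mem_parab3] at hq hq'
    have hfst : q.1.1 = q'.1.1 := by
      have hsum : q.1.1 + q.2.1 = q'.1.1 + q'.2.1 := by
        rw [← Prod.fst_add, ← Prod.fst_add, hq.2, hq'.2]
      funext j
      have hj := congrFun (congrArg₂ (· + ·) h hsum) j
      simp only [Pi.add_apply, Pi.sub_apply] at hj
      exact h2.mul_left_cancel (by linear_combination hj)
    have h1 : q.1 = q'.1 := Prod.ext hfst (by rw [hq.1.1, hq'.1.1, hfst])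
    exact Prod.ext h1 (add_left_cancel (h1 ▸ hq.2.trans hq'.2.symm))

theorem stmt14 (p : ℕ) [Fact p.Prime] (hp : p % 4 = 3) :
    _root_.addEnergy (parab3 p) ≤ (p + 1) * p ^ 4 ∧
      _root_.addEnergy (parab3 p) ≤ (p + 1) * (parab3 p).card ^ 2 := by
  have h2 : IsUnit (2 : ZMod p) := (Ring.two_ne_zero (by rw [ZMod.ringChar_zmod_n]; omega)).isUnit
  have hE := addEnergy_le_mul_card_sq (parab3 p) (p + 1) fun w =>
    (card_filter_parab3_add_eq_le h2 w).trans (card_filter_dotp_self_eq_le hp _)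
  exact ⟨by rwa [card_parab3, ← pow_mul] at hE, hE⟩
end
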